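/- arXiv:2206.11256 — 6 statements merged into one kernel-verified Lean document; each statement's English description precedes it below -/
import Mathlib

section
/- The Apéry constant satisfies ζ(3) = (2/7) ∫₀^{π/2} x(π - x) csc(x) dx. -/
/-!
The Abel means `cscKernel r x = 2 ∑ r^(2k+1) sin((2k+1)x)` of the divergent expansion
`csc x = 2 ∑ sin((2k+1)x)` have the closed form `2 Im (z / (1 - z²))` with `z = r e^{ix}`; for
`0 ≤ r < 1` they lie between `0` and `csc x` on `(0, π/2]` and tend to `csc x` as `r → 1⁻`.
Integrating termwise against `x (π - x)`, with `∫₀^{π/2} x (π - x) sin((2k+1)x) dx = 2/(2k+1)³`,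
gives `∑ 4 r^(2k+1)/(2k+1)³`. Letting `r → 1⁻` on both sides (dominated convergence) yields
`∫₀^{π/2} x (π - x) csc x dx = 4 ∑ 1/(2k+1)³ = (7/2) ζ(3)`.
-/

open Real Filter Topology Set Interval MeasureTheory

lemma Complex.im_div_one_sub_sq (z : ℂ) :
    (z / (1 - z ^ 2)).im = z.im * (1 + Complex.normSq z) / Complex.normSq (1 - z ^ 2) := by
  simp only [Complex.div_im, pow_two, Complex.normSq_apply, Complex.sub_re, Complex.sub_im,
    Complex.mul_re, Complex.mul_im, Complex.one_re, Complex.one_im]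
  ring

lemma Complex.ofReal_mul_exp_mul_I_pow (r x : ℝ) (n : ℕ) :
    ((r : ℂ) * Complex.exp (x * Complex.I)) ^ n =
      ((r ^ n : ℝ) : ℂ) * Complex.exp ((n * x : ℝ) * Complex.I) := by
  rw [mul_pow, ← Complex.exp_nat_mul]
  push_cast
  ring_nf

noncomputable def cscKernel (r x : ℝ) : ℝ :=
  2 * r * (1 + r ^ 2) * sin x / (1 - 2 * r ^ 2 * cos (2 * x) + r ^ 4)

lemma cscKernel_denom_pos {r : ℝ} (hr : |r| < 1) (x : ℝ) :
    0 < 1 - 2 * r ^ 2 * cos (2 * x) + r ^ 4 := by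
  have hr2 : r ^ 2 < 1 := (sq_lt_one_iff_abs_lt_one r).mpr hr
  nlinarith [cos_le_one (2 * x), sq_nonneg r]

lemma hasSum_cscKernel {r : ℝ} (hr : |r| < 1) (x : ℝ) :
    HasSum (fun k : ℕ => 2 * r ^ (2 * k + 1) * sin ((2 * k + 1) * x)) (cscKernel r x) := by
  set z : ℂ := r * Complex.exp (x * Complex.I)
  have hpow (n : ℕ) : (z ^ n).re = r ^ n * cos (n * x) ∧ (z ^ n).im = r ^ n * sin (n * x) := by
    simp only [z, Complex.ofReal_mul_exp_mul_I_pow, Complex.re_ofReal_mul, Complex.im_ofReal_mul,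
      Complex.exp_ofReal_mul_I_re, Complex.exp_ofReal_mul_I_im, and_self]
  have hnormSq : Complex.normSq z = r ^ 2 := by
    simp [z, Complex.normSq_eq_norm_sq, Complex.norm_exp_ofReal_mul_I]
  have hnorm : ‖z ^ 2‖ < 1 := by
    rw [norm_pow, ← Complex.normSq_eq_norm_sq, hnormSq]
    exact (sq_lt_one_iff_abs_lt_one r).mpr hr
  have hgeom := ((hasSum_geometric_of_norm_lt_one hnorm).mul_left z).mapL Complex.imCLM
  have hterm (k : ℕ) :
      2 * Complex.imCLM (z * (z ^ 2) ^ k) = 2 * r ^ (2 * k + 1) * sin ((2 * k + 1) * x) := by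
    rw [← pow_mul, ← pow_succ', Complex.imCLM_apply, (hpow _).2]
    push_cast; ring
  have hdenom : Complex.normSq (1 - z ^ 2) = 1 - 2 * r ^ 2 * cos (2 * x) + r ^ 4 := by
    rw [Complex.normSq_apply, Complex.sub_re, Complex.sub_im, Complex.one_re, Complex.one_im,
      (hpow 2).1, (hpow 2).2]
    push_cast
    linear_combination r ^ 4 * sin_sq_add_cos_sq (2 * x)
  have hsum : 2 * Complex.imCLM (z * (1 - z ^ 2)⁻¹) = cscKernel r x := by
    rw [Complex.imCLM_apply, ← div_eq_mul_inv, Complex.im_div_one_sub_sq, hnormSq, hdenom,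
      ← pow_one z, (hpow 1).2, cscKernel]
    push_cast
    rw [pow_one, one_mul]
    ring
  exact hsum ▸ (hgeom.mul_left 2).congr_fun fun k => (hterm k).symm

lemma abs_cscKernel_le {r x : ℝ} (hr0 : 0 ≤ r) (hr1 : r < 1) (hx : 0 < sin x) :
    |cscKernel r x| ≤ 1 / sin x := by
  have hD := cscKernel_denom_pos (abs_lt.mpr ⟨by linarith, hr1⟩) x
  have hcos : cos (2 * x) = 1 - 2 * sin x ^ 2 := by rw [cos_two_mul, cos_sq']; ring
  rw [abs_of_nonneg (by unfold cscKernel; positivity), cscKernel, div_le_div_iff₀ hD hx, hcos]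
  -- `D - 2r(1 + r²) sin² x = (1 - r)² (1 + r²) + 2r (1 - r)² cos² x`
  nlinarith [mul_nonneg (mul_nonneg hr0 (sq_nonneg (1 - r))) (sub_nonneg.mpr (sin_sq_le_one x)),
    mul_nonneg (sq_nonneg (1 - r)) (add_nonneg zero_le_one (sq_nonneg r))]

lemma tendsto_cscKernel_one {x : ℝ} (hx : sin x ≠ 0) :
    Tendsto (fun r => cscKernel r x) (𝓝 1) (𝓝 (1 / sin x)) := by
  have hD : (1 : ℝ) - 2 * 1 ^ 2 * cos (2 * x) + 1 ^ 4 = 4 * sin x ^ 2 := by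
    rw [cos_two_mul, cos_sq']; ring
  have hval : cscKernel 1 x = 1 / sin x := by
    rw [cscKernel, hD]; field_simp; ring
  have hcont : ContinuousAt (fun r => cscKernel r x) 1 :=
    ContinuousAt.div (by fun_prop) (by fun_prop) (by rw [hD]; positivity)
  exact hval ▸ hcont.tendsto

lemma integral_mul_pi_sub_mul_sin {n : ℝ} (hn : n ≠ 0) (hcos : cos (n * (π / 2)) = 0) :
    ∫ x in (0 : ℝ)..π / 2, x * (π - x) * sin (n * x) = 2 / n ^ 3 := by
  set G : ℝ → ℝ := fun x =>
    -(x * (π - x)) * cos (n * x) / n + (π - 2 * x) * sin (n * x) / n ^ 2 - 2 * cos (n * x) / n ^ 3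
  have hG (x : ℝ) : HasDerivAt G (x * (π - x) * sin (n * x)) x := by
    have hlin : HasDerivAt (fun y => n * y) n x := by simpa using (hasDerivAt_id x).const_mul n
    have hpoly : HasDerivAt (fun y => -(y * (π - y))) (2 * x - π) x :=
      ((hasDerivAt_id' x).mul ((hasDerivAt_id' x).const_sub π)).neg.congr_deriv (by ring)
    have hlin' : HasDerivAt (fun y => π - 2 * y) (-2) x :=
      (((hasDerivAt_id' x).const_mul 2).const_sub π).congr_deriv (by ring)
    exact ((((hpoly.mul hlin.cos).div_const n).add ((hlin'.mul hlin.sin).div_const (n ^ 2))).sub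
      ((hlin.cos.const_mul 2).div_const (n ^ 3))).congr_deriv (by field_simp; ring)
  rw [intervalIntegral.integral_eq_sub_of_hasDerivAt (fun x _ => hG x)
    (by apply Continuous.intervalIntegrable; fun_prop)]
  simp only [G, hcos, mul_zero, sin_zero, cos_zero]
  field_simp
  ring

lemma cos_odd_mul_pi_div_two (k : ℕ) : cos ((2 * k + 1) * (π / 2)) = 0 := by
  rw [show (2 * k + 1) * (π / 2) = k * π + π / 2 by ring, cos_add_pi_div_two, sin_nat_mul_pi,
    neg_zero]

lemma hasSum_integral_mul_cscKernel {r : ℝ} (hr : |r| < 1) :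
    HasSum (fun k : ℕ => 4 / (2 * (k : ℝ) + 1) ^ 3 * r ^ (2 * k + 1))
      (∫ x in (0 : ℝ)..π / 2, x * (π - x) * cscKernel r x) := by
  have hbound (k : ℕ) (x : ℝ) (hx : x ∈ Ι 0 (π / 2)) :
      ‖x * (π - x) * (2 * r ^ (2 * k + 1) * sin ((2 * k + 1) * x))‖ ≤
        π ^ 2 / 2 * |r| ^ (2 * k + 1) := by
    rw [Set.uIoc_of_le (by positivity)] at hx
    have hpoly : |x * (π - x)| ≤ π ^ 2 / 4 := by
      rw [abs_of_nonneg (mul_nonneg hx.1.le (by linarith [hx.2, pi_pos]))]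
      nlinarith [sq_nonneg (x - π / 2)]
    rw [Real.norm_eq_abs, abs_mul, abs_mul (2 * _), abs_mul 2, abs_pow, abs_two]
    calc |x * (π - x)| * (2 * |r| ^ (2 * k + 1) * |sin ((2 * k + 1) * x)|)
        ≤ π ^ 2 / 4 * (2 * |r| ^ (2 * k + 1) * 1) := by
          gcongr
          exact abs_sin_le_one _
      _ = π ^ 2 / 2 * |r| ^ (2 * k + 1) := by ring
  have hgeom : Summable fun k : ℕ => π ^ 2 / 2 * |r| ^ (2 * k + 1) := by
    simp_rw [pow_succ, pow_mul]
    exact ((summable_geometric_of_lt_one (by positivity)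
      (by simpa [sq_abs] using (sq_lt_one_iff_abs_lt_one r).mpr hr)).mul_right _).mul_left _
  have hsum := intervalIntegral.hasSum_integral_of_dominated_convergence (μ := volume)
    (fun (k : ℕ) _ => π ^ 2 / 2 * |r| ^ (2 * k + 1))
    (fun k => (by fun_prop : Continuous fun x =>
      x * (π - x) * (2 * r ^ (2 * k + 1) * sin ((2 * k + 1) * x))).aestronglyMeasurable)
    (fun k => ae_of_all _ (hbound k)) (ae_of_all _ fun _ _ => hgeom) intervalIntegrable_const
    (ae_of_all _ fun x _ => (hasSum_cscKernel hr x).mul_left (x * (π - x)))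
  refine hsum.congr_fun fun k => ?_
  simp only [mul_left_comm _ (2 * r ^ (2 * k + 1))]
  rw [intervalIntegral.integral_const_mul, integral_mul_pi_sub_mul_sin (by positivity)
    (cos_odd_mul_pi_div_two k)]
  ring

lemma mul_pi_sub_mul_one_div_sin_le {x : ℝ} (hx0 : 0 < x) (hx : x ≤ π / 2) :
    x * (π - x) * (1 / sin x) ≤ π ^ 2 / 2 := by
  have hjordan := mul_le_sin hx0.le hx
  have hsin : 0 < sin x := lt_of_lt_of_le (by positivity) hjordan
  rw [← mul_div_assoc, mul_one, div_le_iff₀ hsin]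
  calc x * (π - x) ≤ π ^ 2 / 2 * (2 / π * x) := by
        field_simp
        nlinarith
    _ ≤ π ^ 2 / 2 * sin x := by gcongr

lemma tendsto_integral_mul_cscKernel :
    Tendsto (fun r => ∫ x in (0 : ℝ)..π / 2, x * (π - x) * cscKernel r x) (𝓝[<] 1)
      (𝓝 (∫ x in (0 : ℝ)..π / 2, x * (π - x) * (1 / sin x))) := by
  have hsin {x : ℝ} (hx : x ∈ Ι 0 (π / 2)) : 0 < sin x := by
    rw [uIoc_of_le (by positivity)] at hx
    exact sin_pos_of_pos_of_lt_pi hx.1 (by linarith [hx.2, pi_pos])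
  refine intervalIntegral.tendsto_integral_filter_of_dominated_convergence (fun _ => π ^ 2 / 2)
    (Eventually.of_forall fun r => by unfold cscKernel; fun_prop)
    ?_ intervalIntegrable_const
    (ae_of_all _ fun x hx => ((tendsto_cscKernel_one (hsin hx).ne').mono_left
      nhdsWithin_le_nhds).const_mul _)
  filter_upwards [Ioo_mem_nhdsLT zero_lt_one] with r hr
  refine ae_of_all _ fun x hx => ?_
  obtain ⟨hx0, hxπ⟩ : x ∈ Ioc 0 (π / 2) := by rwa [uIoc_of_le (by positivity)] at hx
  have hpoly : 0 ≤ x * (π - x) := mul_nonneg hx0.le (by linarith [pi_pos])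
  calc ‖x * (π - x) * cscKernel r x‖ = x * (π - x) * |cscKernel r x| := by
        rw [Real.norm_eq_abs, abs_mul, abs_of_nonneg hpoly]
    _ ≤ x * (π - x) * (1 / sin x) := by gcongr; exact abs_cscKernel_le hr.1.le hr.2 (hsin hx)
    _ ≤ π ^ 2 / 2 := mul_pi_sub_mul_one_div_sin_le hx0 hxπ

lemma tendsto_tsum_mul_pow_nhdsLT_one {a : ℕ → ℝ} (ha : Summable a) (n : ℕ → ℕ) :
    Tendsto (fun r => ∑' k, a k * r ^ n k) (𝓝[<] 1) (𝓝 (∑' k, a k)) := by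
  refine tendsto_tsum_of_dominated_convergence ha.abs (fun k => ?_) ?_
  · simpa using ((continuous_pow (n k)).tendsto 1).mono_left nhdsWithin_le_nhds |>.const_mul (a k)
  · filter_upwards [Ioo_mem_nhdsLT zero_lt_one] with r hr k
    rw [Real.norm_eq_abs, abs_mul, abs_pow, abs_of_pos hr.1]
    exact mul_le_of_le_one_right (abs_nonneg _) (pow_le_one₀ hr.1.le hr.2.le)

lemma hasSum_one_div_odd_pow {p : ℕ} (hp : 1 < p) :
    HasSum (fun k : ℕ => 1 / (2 * (k : ℝ) + 1) ^ p)
      ((1 - 1 / 2 ^ p) * ∑' n : ℕ, 1 / ((n : ℝ) + 1) ^ p) := by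
  set f : ℕ → ℝ := fun n => 1 / ((n : ℝ) + 1) ^ p
  have hf : Summable f := by
    simpa [f] using (summable_nat_add_iff 1).mpr (summable_one_div_nat_pow.mpr hp)
  have hodd : HasSum (fun k => f (2 * k + 1)) (1 / 2 ^ p * ∑' n, f n) := by
    have hscale : (fun k => f (2 * k + 1)) = fun k => 1 / 2 ^ p * f k := by
      funext k
      simp only [f]
      push_cast
      rw [show 2 * (k : ℝ) + 1 + 1 = 2 * (k + 1) by ring, mul_pow]
      field_simp
    exact hscale ▸ hf.hasSum.mul_left _
  have heven := (hf.comp_injective (mul_right_injective₀ two_ne_zero)).hasSum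
  have htot := hf.hasSum.unique (heven.even_add_odd hodd)
  have hvals : (f ∘ fun k => 2 * k) = fun k : ℕ => 1 / (2 * (k : ℝ) + 1) ^ p := by
    funext k; simp [f]
  have hsum : (1 - 1 / 2 ^ p) * ∑' n, f n = ∑' k, (f ∘ fun k => 2 * k) k := by
    linear_combination htot
  rw [← hvals, hsum]
  exact heven

theorem zeta3_csc_integral :
    (∑' n : ℕ, 1 / ((n : ℝ) + 1) ^ 3) =
      (2 / 7) * ∫ x in (0 : ℝ)..(π / 2), x * (π - x) * (1 / Real.sin x) := by
  have hodd := hasSum_one_div_odd_pow (p := 3) (by norm_num)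
  have hcoeff : HasSum (fun k : ℕ => 4 / (2 * (k : ℝ) + 1) ^ 3)
      (4 * ((1 - 1 / 2 ^ 3) * ∑' n : ℕ, 1 / ((n : ℝ) + 1) ^ 3)) := by
    simpa only [mul_one_div] using hodd.mul_left 4
  have hseries := tendsto_tsum_mul_pow_nhdsLT_one hcoeff.summable (fun k => 2 * k + 1)
  have hintegral : Tendsto (fun r => ∫ x in (0 : ℝ)..π / 2, x * (π - x) * cscKernel r x) (𝓝[<] 1)
      (𝓝 (∑' k : ℕ, 4 / (2 * (k : ℝ) + 1) ^ 3)) := by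
    refine hseries.congr' ?_
    filter_upwards [Ioo_mem_nhdsLT (show (-1 : ℝ) < 1 by norm_num)] with r hr
    exact (hasSum_integral_mul_cscKernel (abs_lt.mpr hr)).tsum_eq
  rw [tendsto_nhds_unique tendsto_integral_mul_cscKernel hintegral, hcoeff.tsum_eq]
  ring
end

section
/- ζ(3) = (1/7) ∫₀^{π} x(π - x) csc(x) dx. -/
/-!
Multiplying the identity `2 sin x ∑_{n<N} sin ((2n+1) x) = 1 - cos (2N x)` by `x (π - x) / sin x`
and integrating over `[0, π]`, with `∫₀^π x (π - x) sin ((2n+1) x) = 4 / (2n+1)³`, gives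
`∫ x (π - x) csc x = ∑_{n<N} 8 / (2n+1)³ + ∫ x (π - x) csc x cos (2N x)`.
Since `x (π - x) csc x` is bounded on `(0, π)`, the last integral tends to `0` by the
Riemann–Lebesgue lemma, so the integral equals `8 ∑ 1/(2n+1)³ = 7 ζ(3)`.
-/

open Real MeasureTheory Filter Topology

theorem tendsto_integral_mul_cos_cocompact {f : ℝ → ℝ} (hf : Integrable f) :
    Tendsto (fun t => ∫ x, f x * cos (t * x)) (cocompact ℝ) (𝓝 0) := by
  -- `∫ f x cos (t x)` is the real part of `𝓕 f (t / (2π))`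
  have hRL := (Complex.continuous_re.tendsto 0).comp
    ((Real.zero_at_infty_fourier (fun x => (f x : ℂ))).comp
      (tendsto_cocompact_mul_right₀ (inv_ne_zero two_pi_pos.ne')))
  refine hRL.congr fun t => ?_
  have hint := (Real.fourierIntegral_convergent_iff (μ := volume) (E := ℂ) (t * (2 * π)⁻¹)).2
    (Complex.ofRealCLM.integrable_comp hf)
  simp only [RCLike.inner_apply, conj_trivial, mul_comm (t * (2 * π)⁻¹),
    Complex.ofRealCLM_apply] at hint
  simp only [Function.comp_apply, Real.fourier_real_eq]
  rw [← Complex.reCLM_apply]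
  refine (Complex.reCLM.integral_comp_comm hint).symm.trans ?_
  congr 1 with x
  rw [Complex.reCLM_apply, Circle.smul_def, Real.fourierChar_apply, smul_eq_mul, Complex.mul_re,
    Complex.exp_ofReal_mul_I_re]
  simp only [Complex.ofReal_re, Complex.ofReal_im, mul_zero, sub_zero, mul_neg, cos_neg]
  field_simp

theorem tendsto_setIntegral_mul_cos_cocompact {f : ℝ → ℝ} {s : Set ℝ} (hs : MeasurableSet s)
    (hf : IntegrableOn f s) :
    Tendsto (fun t => ∫ x in s, f x * cos (t * x)) (cocompact ℝ) (𝓝 0) := by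
  refine (tendsto_integral_mul_cos_cocompact ((integrable_indicator_iff hs).2 hf)).congr fun t => ?_
  rw [← integral_indicator hs]
  congr 1 with x
  by_cases hx : x ∈ s <;> simp [hx]

theorem IntervalIntegrable.tendsto_integral_mul_cos_cocompact {f : ℝ → ℝ} {a b : ℝ}
    (hf : IntervalIntegrable f volume a b) :
    Tendsto (fun t => ∫ x in a..b, f x * cos (t * x)) (cocompact ℝ) (𝓝 0) := by
  simpa only [intervalIntegral, sub_zero] using
    (tendsto_setIntegral_mul_cos_cocompact measurableSet_Ioc hf.1).sub
      (tendsto_setIntegral_mul_cos_cocompact measurableSet_Ioc hf.2)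

theorem integral_mul_pi_sub_mul_sin_nat_mul {k : ℕ} (hk : k ≠ 0) :
    ∫ x in (0 : ℝ)..π, x * (π - x) * sin (k * x) = 2 * (1 - (-1) ^ k) / k ^ 3 := by
  have hk' : (k : ℝ) ≠ 0 := Nat.cast_ne_zero.2 hk
  have hderiv : ∀ x ∈ Set.uIcc (0 : ℝ) π, HasDerivAt
      (fun x => -(x * (π - x) * cos (k * x)) / k + (π - 2 * x) * sin (k * x) / k ^ 2
        - 2 * cos (k * x) / k ^ 3)
      (x * (π - x) * sin (k * x)) x := by
    intro x _
    have hkx : HasDerivAt (fun x : ℝ => k * x) k x := by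
      simpa using (hasDerivAt_id x).const_mul (k : ℝ)
    have hp : HasDerivAt (fun x : ℝ => x * (π - x)) (π - 2 * x) x :=
      ((hasDerivAt_id' x).mul ((hasDerivAt_id' x).const_sub π)).congr_deriv (by ring)
    have hq : HasDerivAt (fun x : ℝ => π - 2 * x) (-2) x :=
      (((hasDerivAt_id' x).const_mul 2).const_sub π).congr_deriv (by ring)
    refine ((((hp.mul hkx.cos).neg.div_const k).add ((hq.mul hkx.sin).div_const (k ^ 2))).sub
      ((hkx.cos.const_mul 2).div_const (k ^ 3))).congr_deriv ?_
    field_simp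
    ring
  rw [intervalIntegral.integral_eq_sub_of_hasDerivAt hderiv
    (Continuous.intervalIntegrable (by fun_prop) _ _)]
  simp only [sin_nat_mul_pi, cos_nat_mul_pi, mul_zero, sin_zero, cos_zero, sub_self]
  field_simp
  ring

theorem integral_mul_pi_sub_mul_sin_odd (n : ℕ) :
    ∫ x in (0 : ℝ)..π, x * (π - x) * sin ((2 * n + 1) * x) = 4 / (2 * (n : ℝ) + 1) ^ 3 := by
  have h := integral_mul_pi_sub_mul_sin_nat_mul (k := 2 * n + 1) (by omega)
  rw [Odd.neg_one_pow ⟨n, rfl⟩] at h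
  push_cast at h
  rw [h]
  ring

theorem two_mul_sin_mul_sum_sin_odd (x : ℝ) (N : ℕ) :
    2 * sin x * ∑ n ∈ Finset.range N, sin ((2 * n + 1) * x) = 1 - cos (2 * N * x) := by
  induction N with
  | zero => simp
  | succ N ih =>
    rw [Finset.sum_range_succ, mul_add, ih, two_mul_sin_mul_sin,
      show x - (2 * N + 1) * x = -(2 * N * x) by ring, cos_neg]
    push_cast
    ring_nf

/-- At the zeros of `sin` both sides vanish (`1 / 0 = 0`), so no hypothesis is needed. -/
theorem one_div_sin_eq_sum_add (x : ℝ) (N : ℕ) :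
    1 / sin x =
      2 * ∑ n ∈ Finset.range N, sin ((2 * n + 1) * x) + 1 / sin x * cos (2 * N * x) := by
  by_cases hx : sin x = 0
  · obtain ⟨m, rfl⟩ := sin_eq_zero_iff.1 hx
    have : ∀ n : ℕ, sin ((2 * n + 1) * (m * π)) = 0 := fun n => by
      rw [← mul_assoc]
      exact_mod_cast sin_int_mul_pi ((2 * n + 1) * m)
    simp [hx, this]
  · set S := ∑ n ∈ Finset.range N, sin ((2 * n + 1) * x)
    have h : cos (2 * N * x) = 1 - 2 * sin x * S := by linarith [two_mul_sin_mul_sum_sin_odd x N]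
    rw [h]
    field_simp
    ring

theorem mul_pi_sub_le_sin {x : ℝ} (h0 : 0 ≤ x) (hπ : x ≤ π) :
    x * (π - x) ≤ π ^ 2 / 2 * sin x := by
  have key : ∀ y, 0 ≤ y → y ≤ π / 2 → y * (π - y) ≤ π ^ 2 / 2 * sin y := by
    intro y hy0 hy
    calc y * (π - y) ≤ π ^ 2 / 2 * (2 / π * y) := by field_simp; nlinarith
      _ ≤ π ^ 2 / 2 * sin y := by gcongr; exact mul_le_sin hy0 hy
  rcases le_total x (π / 2) with h | h
  · exact key x h0 h
  · simpa [sin_pi_sub, mul_comm] using key (π - x) (by linarith) (by linarith)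

theorem intervalIntegrable_mul_pi_sub_div_sin :
    IntervalIntegrable (fun x => x * (π - x) * (1 / sin x)) volume 0 π := by
  rw [intervalIntegrable_iff_integrableOn_Ioc_of_le pi_pos.le]
  refine IntegrableOn.of_bound measure_Ioc_lt_top (by fun_prop) (π ^ 2 / 2) ?_
  refine (ae_restrict_iff' measurableSet_Ioc).2 (ae_of_all _ fun x ⟨h0, hπ⟩ => ?_)
  have hsin : 0 ≤ sin x := sin_nonneg_of_nonneg_of_le_pi h0.le hπ
  rw [mul_one_div, Real.norm_of_nonneg (div_nonneg (mul_nonneg h0.le (sub_nonneg.2 hπ)) hsin)]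
  exact div_le_of_le_mul₀ hsin (by positivity) (mul_pi_sub_le_sin h0.le hπ)

theorem hasSum_one_div_two_mul_add_one_pow {p : ℕ} (hp : 1 < p) :
    HasSum (fun n : ℕ => 1 / (2 * (n : ℝ) + 1) ^ p)
      ((1 - 1 / 2 ^ p) * ∑' n : ℕ, 1 / ((n : ℝ) + 1) ^ p) := by
  set f : ℕ → ℝ := fun n => 1 / ((n : ℝ) + 1) ^ p
  have hf : Summable f := by
    simpa [f] using (summable_nat_add_iff 1).2 (Real.summable_one_div_nat_pow.2 hp)
  have hodd : HasSum (fun n => f (2 * n + 1)) (1 / 2 ^ p * ∑' n, f n) := by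
    have h : (fun n => f (2 * n + 1)) = fun n => 1 / 2 ^ p * f n := by
      funext n
      simp only [f]
      push_cast
      rw [show (2 * (n : ℝ) + 1 + 1) = 2 * (n + 1) by ring, mul_pow]
      field_simp
    rw [h]
    exact hf.hasSum.mul_left _
  have heven : Summable fun n => f (2 * n) :=
    hf.comp_injective (mul_right_injective₀ two_ne_zero)
  have hsplit := (heven.hasSum.even_add_odd hodd).unique hf.hasSum
  have h := heven.hasSum
  rw [show ∑' n, f (2 * n) = (1 - 1 / 2 ^ p) * ∑' n, f n by linarith] at h
  simpa only [f, Nat.cast_mul, Nat.cast_ofNat] using h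

theorem integral_mul_pi_sub_div_sin_eq (N : ℕ) :
    ∫ x in (0 : ℝ)..π, x * (π - x) * (1 / sin x) =
      ∑ n ∈ Finset.range N, 8 / (2 * (n : ℝ) + 1) ^ 3 +
        ∫ x in (0 : ℝ)..π, x * (π - x) * (1 / sin x) * cos (2 * N * x) := by
  have hterm : ∀ n : ℕ, IntervalIntegrable
      (fun x => 2 * (x * (π - x) * sin ((2 * n + 1) * x))) volume 0 π :=
    fun n => Continuous.intervalIntegrable (by fun_prop) _ _
  have hsum : IntervalIntegrable (fun x => ∑ n ∈ Finset.range N,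
      2 * (x * (π - x) * sin ((2 * n + 1) * x))) volume 0 π :=
    Continuous.intervalIntegrable (by fun_prop) _ _
  have hrem : IntervalIntegrable
      (fun x => x * (π - x) * (1 / sin x) * cos (2 * N * x)) volume 0 π :=
    intervalIntegrable_mul_pi_sub_div_sin.mul_continuousOn (by fun_prop)
  calc ∫ x in (0 : ℝ)..π, x * (π - x) * (1 / sin x)
      = ∫ x in (0 : ℝ)..π,
          (∑ n ∈ Finset.range N, 2 * (x * (π - x) * sin ((2 * n + 1) * x)) +
            x * (π - x) * (1 / sin x) * cos (2 * N * x)) := by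
        congr 1 with x
        conv_lhs => rw [one_div_sin_eq_sum_add x N]
        simp only [mul_add, Finset.mul_sum]
        congr 1
        · exact Finset.sum_congr rfl fun n _ => by ring
        · ring
    _ = ∑ n ∈ Finset.range N, 8 / (2 * (n : ℝ) + 1) ^ 3 +
          ∫ x in (0 : ℝ)..π, x * (π - x) * (1 / sin x) * cos (2 * N * x) := by
        rw [intervalIntegral.integral_add hsum hrem,
          intervalIntegral.integral_finsetSum fun n _ => hterm n]
        congr 1
        refine Finset.sum_congr rfl fun n _ => ?_
        rw [intervalIntegral.integral_const_mul, integral_mul_pi_sub_mul_sin_odd]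
        ring

theorem zeta3_csc_integral_pi :
    (∑' n : ℕ, 1 / ((n : ℝ) + 1) ^ 3) =
      (1 / 7) * ∫ x in (0 : ℝ)..π, x * (π - x) * (1 / Real.sin x) := by
  have hodd := (hasSum_one_div_two_mul_add_one_pow (p := 3) (by norm_num)).mul_left 8
  simp only [mul_one_div] at hodd
  have hRL : Tendsto (fun N : ℕ => ∫ x in (0 : ℝ)..π,
      x * (π - x) * (1 / sin x) * cos (2 * N * x)) atTop (𝓝 0) :=
    intervalIntegrable_mul_pi_sub_div_sin.tendsto_integral_mul_cos_cocompact.comp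
      ((tendsto_natCast_atTop_atTop.const_mul_atTop two_pos).mono_right atTop_le_cocompact)
  have hpartial : Tendsto (fun N => ∑ n ∈ Finset.range N, 8 / (2 * (n : ℝ) + 1) ^ 3)
      atTop (𝓝 (∫ x in (0 : ℝ)..π, x * (π - x) * (1 / sin x))) := by
    have h := (tendsto_const_nhds (x := ∫ x in (0 : ℝ)..π, x * (π - x) * (1 / sin x))).sub hRL
    rw [sub_zero] at h
    refine h.congr fun N => ?_
    linarith [integral_mul_pi_sub_div_sin_eq N]
  have := tendsto_nhds_unique hodd.tendsto_sum_nat hpartial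
  linarith
end

section
/- For every natural number n ≥ 1, ∑_{j=1}^n (-1)^{j-1} (n!)² / ((n-j)!(n+j)!) = 1/2. -/
/-!
With `P m = (-1)^m (n - m) (n!)² / ((n - m)! (n + m)!)`, the `(m + 1)`-st summand times `2n`
is `P m - P (m + 1)`. The sum therefore telescopes to `(P 0 - P n) / (2n) = n / (2n)`.
-/

open Finset Nat

theorem sum_Icc_one_eq_sum_range {M : Type*} [AddCommMonoid M] (f : ℕ → M) (n : ℕ) :
    ∑ j ∈ Icc 1 n, f j = ∑ i ∈ range n, f (i + 1) := by
  rw [← Ico_add_one_right_eq_Icc, sum_Ico_eq_sum_range, add_tsub_cancel_right]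
  simp only [add_comm 1]

def altFactorialPotential (n m : ℕ) : ℚ :=
  (-1) ^ m * ((n : ℚ) - m) * (n ! : ℚ) ^ 2 / ((n - m)! * (n + m)!)

theorem altFactorialPotential_zero (n : ℕ) : altFactorialPotential n 0 = n := by
  have : (n ! : ℚ) ≠ 0 := by positivity
  simp only [altFactorialPotential, pow_zero, one_mul, CharP.cast_eq_zero, sub_zero, Nat.sub_zero,
    add_zero]
  field_simp

theorem altFactorialPotential_self (n : ℕ) : altFactorialPotential n n = 0 := by
  simp [altFactorialPotential]

/- Over the common denominator `(n - m - 1)! (n + m + 1)!` the two potentials have numerators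
`n + m + 1` and `n - m - 1`, which add up to `2n`. -/
theorem altFactorialPotential_sub_succ {n m : ℕ} (hm : m < n) :
    altFactorialPotential n m - altFactorialPotential n (m + 1) =
      2 * n * ((-1) ^ m * (n ! : ℚ) ^ 2 / ((n - (m + 1))! * (n + (m + 1))!)) := by
  obtain ⟨k, rfl⟩ : ∃ k, n = m + 1 + k := ⟨n - (m + 1), by omega⟩
  have hl : m + 1 + k - m = k + 1 := by omega
  have hr : m + 1 + k - (m + 1) = k := by omega
  have hs : m + 1 + k + (m + 1) = m + 1 + k + m + 1 := by omega
  simp only [altFactorialPotential, hl, hr, hs, factorial_succ]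
  push_cast
  field_simp
  ring

theorem alt_factorial_sum_half (n : ℕ) (hn : 1 ≤ n) :
    (∑ j ∈ Finset.Icc 1 n, (-1 : ℚ) ^ (j - 1) *
      ((n.factorial : ℚ)) ^ 2 / (((n - j).factorial : ℚ) * ((n + j).factorial : ℚ))) = 1 / 2 := by
  have hn' : (n : ℚ) ≠ 0 := Nat.cast_ne_zero.mpr (by omega)
  have htelescope : 2 * n * ∑ j ∈ Finset.Icc 1 n, (-1 : ℚ) ^ (j - 1) *
      ((n.factorial : ℚ)) ^ 2 / (((n - j).factorial : ℚ) * ((n + j).factorial : ℚ)) = n := by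
    rw [sum_Icc_one_eq_sum_range, mul_sum]
    simp only [add_tsub_cancel_right]
    rw [← sum_congr rfl fun m hm => altFactorialPotential_sub_succ (mem_range.mp hm),
      sum_range_sub', altFactorialPotential_zero, altFactorialPotential_self, sub_zero]
  apply mul_left_cancel₀ (mul_ne_zero two_ne_zero hn')
  rw [htelescope]
  ring
end

section
/- For every natural number n ≥ 1, ∑_{j=1}^n (-1)^{j-1} j (n!)² / ((n-j)!(n+j)!) = n / (2(2n-1)). -/
/-!
The sum telescopes. With `A k = (n!)² / ((n-k)! (n+k)!)`, the hypergeometric relation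
`(n - k) A k = (n + k + 1) A (k+1)` shows that
`G k = (-1)^k (2k+1) (n-k) A k / (2(2n-1))` satisfies `G k - G (k+1) = (-1)^k (k+1) A (k+1)`,
so the sum equals `G 0 - G n = n / (2(2n-1))`.
-/

open Finset Nat

namespace AltFactorialSum

noncomputable def factorialSqRatio (n k : ℕ) : ℚ :=
  (n ! : ℚ) ^ 2 / ((n - k)! * (n + k)!)

lemma factorialSqRatio_zero (n : ℕ) : factorialSqRatio n 0 = 1 := by
  simp [factorialSqRatio, sq, factorial_ne_zero]

lemma sub_mul_factorialSqRatio {n k : ℕ} (hk : k < n) :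
    ((n : ℚ) - k) * factorialSqRatio n k = (n + k + 1) * factorialSqRatio n (k + 1) := by
  obtain ⟨m, rfl⟩ : ∃ m, n = k + 1 + m := ⟨n - (k + 1), by omega⟩
  have hsub : k + 1 + m - k = m + 1 := by omega
  have hsub' : k + 1 + m - (k + 1) = m := by omega
  simp only [factorialSqRatio, hsub, hsub', ← add_assoc, factorial_succ]
  field_simp
  push_cast
  ring

noncomputable def primitive (n k : ℕ) : ℚ :=
  (-1) ^ k * (2 * k + 1) * ((n : ℚ) - k) / (2 * (2 * n - 1)) * factorialSqRatio n k

lemma two_mul_natCast_sub_one_ne_zero (n : ℕ) : 2 * (n : ℚ) - 1 ≠ 0 :=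
  sub_ne_zero.mpr (by norm_cast; omega)

lemma primitive_sub_primitive_succ {n k : ℕ} (hk : k < n) :
    primitive n k - primitive n (k + 1) = (-1) ^ k * (k + 1) * factorialSqRatio n (k + 1) := by
  have hrec := sub_mul_factorialSqRatio hk
  have hden := two_mul_natCast_sub_one_ne_zero n
  unfold primitive
  push_cast
  field_simp
  linear_combination (-1) ^ k * (2 * k + 1) * hrec

lemma primitive_zero (n : ℕ) : primitive n 0 = n / (2 * (2 * n - 1)) := by
  simp [primitive, factorialSqRatio_zero]

lemma primitive_self (n : ℕ) : primitive n n = 0 := by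
  simp [primitive]

end AltFactorialSum

open AltFactorialSum in
theorem alt_factorial_sum_j_general (n : ℕ) :
    (∑ j ∈ Finset.Icc 1 n, (-1 : ℚ) ^ (j - 1) * (j : ℚ) *
      ((n.factorial : ℚ)) ^ 2 / (((n - j).factorial : ℚ) * ((n + j).factorial : ℚ))) =
      (n : ℚ) / (2 * (2 * (n : ℚ) - 1)) := by
  rw [← Ico_add_one_right_eq_Icc, sum_Ico_eq_sum_range, add_tsub_cancel_right,
    ← primitive_zero, ← sub_zero (primitive n 0), ← primitive_self n, ← sum_range_sub']
  refine sum_congr rfl fun k hk => ?_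
  rw [primitive_sub_primitive_succ (mem_range.mp hk), factorialSqRatio, add_comm 1 k,
    add_tsub_cancel_right, mul_div_assoc]
  push_cast
  rfl

theorem alt_factorial_sum_j (n : ℕ) (hn : 1 ≤ n) :
    (∑ j ∈ Finset.Icc 1 n, (-1 : ℚ) ^ (j - 1) * (j : ℚ) *
      ((n.factorial : ℚ)) ^ 2 / (((n - j).factorial : ℚ) * ((n + j).factorial : ℚ))) =
      (n : ℚ) / (2 * (2 * (n : ℚ) - 1)) :=
  alt_factorial_sum_j_general n
end

section
/- For all natural numbers n > m ≥ 1, ∑_{j=1}^n (-1)^j (n!)² j^{2m} / ((n-j)!(n+j)!) = 0. -/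
/-!
Since `(n!)² / ((n - j)! (n + j)!) = (n!)² / (2n)! · C(2n, n + j)`, the sum is a multiple of
`∑_{j=1}^n (-1)^j C(2n, n + j) j^{2m}`. The full alternating sum
`∑_{k=0}^{2n} (-1)^k C(2n, k) (k - n)^{2m}` is, up to sign, the `2n`-th forward difference of a
polynomial of degree `2m < 2n`, hence zero. Its terms are symmetric under `k ↦ 2n - k` and the
central one vanishes because `m ≥ 1`, so it is twice the half sum above.
-/

open Finset

theorem sum_range_neg_one_pow_mul_choose_mul_add_pow_eq_zero {R : Type*} [CommRing R]
    {j N : ℕ} (h : j < N) (y : R) :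
    ∑ k ∈ range (N + 1), (-1) ^ k * (N.choose k : R) * (y + k) ^ j = 0 := by
  have hΔ := fwdDiff_iter_eq_sum_shift (1 : R) (fun x ↦ x ^ j) N y
  rw [fwdDiff_iter_pow_eq_zero_of_lt h, Pi.zero_apply, eq_comm] at hΔ
  calc ∑ k ∈ range (N + 1), (-1) ^ k * (N.choose k : R) * (y + k) ^ j
      = (-1) ^ N * ∑ k ∈ range (N + 1),
          ((-1 : ℤ) ^ (N - k) * N.choose k) • (y + k • (1 : R)) ^ j := by
        rw [mul_sum]
        refine sum_congr rfl fun k hk ↦ ?_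
        have hkN : k ≤ N := Nat.lt_succ_iff.mp (mem_range.mp hk)
        have hsign : (-1 : R) ^ k = (-1) ^ (N + (N - k)) :=
          neg_one_pow_congr (by grind)
        rw [hsign, pow_add, zsmul_eq_mul, nsmul_one]
        push_cast
        ring
    _ = 0 := by rw [hΔ, mul_zero]

theorem sum_range_two_mul_add_one_of_symm {M : Type*} [AddCommMonoid M] (f : ℕ → M) (n : ℕ)
    (hf : ∀ k ≤ 2 * n, f (2 * n - k) = f k) :
    ∑ k ∈ range (2 * n + 1), f k = f n + 2 • ∑ j ∈ Icc 1 n, f (n + j) := by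
  have hlow : ∑ k ∈ range n, f k = ∑ j ∈ Icc 1 n, f (n + j) :=
    sum_nbij' (n - ·) (n - ·) (by grind) (by grind) (by grind) (by grind)
      fun k hk ↦ by rw [← hf k (by grind)]; congr 1; grind
  have hhigh : ∑ k ∈ range n, f (n + (k + 1)) = ∑ j ∈ Icc 1 n, f (n + j) :=
    sum_nbij' (· + 1) (· - 1) (by grind) (by grind) (by grind) (by grind) fun _ _ ↦ rfl
  rw [show 2 * n + 1 = n + (n + 1) by ring, sum_range_add, sum_range_succ', hlow, hhigh,
    add_zero, two_nsmul]
  abel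

theorem sum_Icc_neg_one_pow_mul_choose_mul_pow_eq_zero {R : Type*} [CommRing R]
    [IsAddTorsionFree R] {n m : ℕ} (hm : 1 ≤ m) (hmn : m < n) :
    ∑ j ∈ Icc 1 n, (-1) ^ j * ((2 * n).choose (n + j) : R) * (j : R) ^ (2 * m) = 0 := by
  set f : ℕ → R := fun k ↦ (-1) ^ k * ((2 * n).choose k : R) * (-(n : R) + k) ^ (2 * m)
  have hsymm : ∀ k ≤ 2 * n, f (2 * n - k) = f k := by
    intro k hk
    have hsign : (-1 : R) ^ (2 * n - k) = (-1) ^ k := neg_one_pow_congr (by grind)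
    have hreflect : -(n : R) + (2 * n - k : ℕ) = -(-(n : R) + k) := by
      push_cast [Nat.cast_sub hk]; ring
    simp only [f, hsign, Nat.choose_symm hk, hreflect, Even.neg_pow (even_two_mul m)]
  have hcentre : f n = 0 := by simp [f, zero_pow (by omega : 2 * m ≠ 0)]
  have hhalf : ∑ j ∈ Icc 1 n, f (n + j) = 0 := by
    have h := sum_range_neg_one_pow_mul_choose_mul_add_pow_eq_zero (by omega : 2 * m < 2 * n)
      (-(n : R))
    rwa [sum_range_two_mul_add_one_of_symm f n hsymm, hcentre, zero_add,
      nsmul_eq_zero_iff_right two_ne_zero] at h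
  calc _ = (-1) ^ n * ∑ j ∈ Icc 1 n, f (n + j) := by
        rw [mul_sum]
        refine sum_congr rfl fun j _ ↦ ?_
        have hsign : (-1 : R) ^ j = (-1) ^ n * (-1) ^ (n + j) := by
          rw [← pow_add]; exact neg_one_pow_congr (by grind)
        simp only [f, Nat.cast_add, neg_add_cancel_left, hsign]
        ring
    _ = 0 := by rw [hhalf, mul_zero]

theorem alt_factorial_sum_even_power_zero (n m : ℕ) (hm : 1 ≤ m) (hmn : m < n) :
    (∑ j ∈ Finset.Icc 1 n, (-1 : ℚ) ^ j *
      ((n.factorial : ℚ)) ^ 2 * (j : ℚ) ^ (2 * m) /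
        (((n - j).factorial : ℚ) * ((n + j).factorial : ℚ))) = 0 := by
  have hterm : ∀ j ∈ Icc 1 n, (-1 : ℚ) ^ j * (n.factorial : ℚ) ^ 2 * (j : ℚ) ^ (2 * m) /
        (((n - j).factorial : ℚ) * ((n + j).factorial : ℚ)) =
      (n.factorial : ℚ) ^ 2 / (2 * n).factorial *
        ((-1) ^ j * ((2 * n).choose (n + j) : ℚ) * (j : ℚ) ^ (2 * m)) := by
    intro j hj
    have hjn : j ≤ n := (mem_Icc.mp hj).2
    rw [Nat.cast_choose ℚ (by omega : n + j ≤ 2 * n), show 2 * n - (n + j) = n - j by omega]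
    field_simp
  rw [sum_congr rfl hterm, ← mul_sum, sum_Icc_neg_one_pow_mul_choose_mul_pow_eq_zero hm hmn,
    mul_zero]
end

section
/- For every integer n ≥ 2, ζ(n) = (1/(2^{n-1} − 1)) ∑_{k=1}^∞ binom(n+k-1, k) ζ(n+k) / 2^{k+1}. -/
noncomputable def zetaNat (s : ℕ) : ℝ := ∑' m : ℕ, 1 / ((m : ℝ) + 1) ^ s

lemma zetaNat_summable {s : ℕ} (hs : 2 ≤ s) :
    Summable (fun m : ℕ => 1 / ((m : ℝ) + 1) ^ s) := by
  have h := (Real.summable_one_div_nat_pow (p := s)).mpr (by omega)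
  have h2 := (summable_nat_add_iff (f := fun m : ℕ => 1 / (m : ℝ) ^ s) 1).mpr h
  simpa [Nat.cast_add] using h2

lemma zetaNat_hasSum {s : ℕ} (hs : 2 ≤ s) :
    HasSum (fun m : ℕ => 1 / ((m : ℝ) + 1) ^ s) (zetaNat s) :=
  (zetaNat_summable hs).hasSum

lemma inner_hasSum (p m : ℕ) :
    HasSum (fun k : ℕ => ((p + 2 + k).choose (k + 1) : ℝ) /
        (2 ^ (k + 2) * ((m : ℝ) + 1) ^ (p + 2 + k + 1)))
      ((2 : ℝ) ^ (p + 1) / (2 * (m : ℝ) + 1) ^ (p + 2)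
        - 1 / (2 * ((m : ℝ) + 1) ^ (p + 2))) := by
  set x : ℝ := (m : ℝ) with hx
  have hx0 : (0 : ℝ) < x + 1 := by positivity
  have hx1 : x + 1 ≠ 0 := ne_of_gt hx0
  have h2x : (2 * x + 1) ≠ 0 := by positivity
  set r : ℝ := 1 / (2 * (x + 1)) with hrdef
  have hr : ‖r‖ < 1 := by
    rw [Real.norm_eq_abs, abs_of_pos (by positivity), div_lt_one (by positivity)]
    nlinarith [Nat.cast_nonneg (α := ℝ) m]
  have H := hasSum_choose_mul_geometric_of_norm_lt_one (𝕜 := ℝ) (p + 1) hr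
  have H1 : HasSum (fun k : ℕ => (((k + 1) + (p + 1)).choose (p + 1) : ℝ) * r ^ (k + 1))
      (1 / (1 - r) ^ (p + 1 + 1) - 1) := by
    have h' := (hasSum_nat_add_iff'
      (f := fun j : ℕ => (((j + (p + 1)).choose (p + 1) : ℝ)) * r ^ j) 1).mpr H
    simpa using h'
  have H2 := H1.div_const (2 * (x + 1) ^ (p + 2))
  have h1r : 1 - r = (2 * x + 1) / (2 * (x + 1)) := by
    rw [hrdef]; field_simp; ring
  have hfun : (fun k : ℕ => ((p + 2 + k).choose (k + 1) : ℝ) /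
      (2 ^ (k + 2) * (x + 1) ^ (p + 2 + k + 1)))
      = fun k : ℕ => (((k + 1) + (p + 1)).choose (p + 1) : ℝ) * r ^ (k + 1)
          / (2 * (x + 1) ^ (p + 2)) := by
    funext k
    have hch : ((p + 2 + k).choose (k + 1)) = (((k + 1) + (p + 1)).choose (p + 1)) := by
      have h := Nat.choose_symm (n := p + 2 + k) (k := k + 1) (by omega)
      rw [show p + 2 + k - (k + 1) = p + 1 by omega] at h
      rw [← h, show k + 1 + (p + 1) = p + 2 + k by omega]
    rw [hch, hrdef, div_pow, one_pow, mul_pow, mul_div_assoc, div_div, mul_one_div]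
    congr 1
    ring
  have hval : (1 / (1 - r) ^ (p + 1 + 1) - 1) / (2 * (x + 1) ^ (p + 2))
      = (2 : ℝ) ^ (p + 1) / (2 * x + 1) ^ (p + 2) - 1 / (2 * (x + 1) ^ (p + 2)) := by
    rw [h1r, div_pow, mul_pow, one_div_div]
    have hne1 : ((2:ℝ) * x + 1) ^ (p + 2) ≠ 0 := by positivity
    have hne2 : ((x:ℝ) + 1) ^ (p + 2) ≠ 0 := by positivity
    field_simp
    ring
  rw [hfun, ← hval]
  exact H2

lemma hg_lemma (p : ℕ) :
    HasSum (fun m : ℕ => (2 : ℝ) ^ (p + 1) / (2 * (m : ℝ) + 1) ^ (p + 2)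
      - 1 / (2 * ((m : ℝ) + 1) ^ (p + 2)))
      (((2 : ℝ) ^ (p + 1) - 1) * zetaNat (p + 2)) := by
  have hz := zetaNat_hasSum (s := p + 2) (by omega)
  set f : ℕ → ℝ := fun j => 1 / ((j : ℝ) + 1) ^ (p + 2) with hf
  have hOf : HasSum (fun m : ℕ => f (2 * m + 1)) ((1 / 2 : ℝ) ^ (p + 2) * zetaNat (p + 2)) := by
    have h := hz.mul_left ((1 / 2 : ℝ) ^ (p + 2))
    have he : (fun m : ℕ => (1 / 2 : ℝ) ^ (p + 2) * (1 / ((m : ℝ) + 1) ^ (p + 2)))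
        = fun m : ℕ => f (2 * m + 1) := by
      funext m
      rw [hf]
      push_cast
      rw [show 2 * (m : ℝ) + 1 + 1 = 2 * ((m : ℝ) + 1) by ring, mul_pow,
        div_pow, one_pow, div_mul_div_comm, one_mul]
    rw [← he]
    exact h
  have hevensummable : Summable (fun m : ℕ => f (2 * m)) := by
    apply Summable.of_nonneg_of_le (fun m => by rw [hf]; positivity)
      (fun m => ?_) (zetaNat_summable (s := p + 2) (by omega))
    rw [hf]
    apply one_div_le_one_div_of_le (by positivity)
    apply pow_le_pow_left₀ (by positivity)
    push_cast
    nlinarith [Nat.cast_nonneg (α := ℝ) m]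
  have hE := hevensummable.hasSum
  have htot := hE.even_add_odd hOf
  have hval := hz.unique htot
  have hA : (∑' m : ℕ, f (2 * m)) = (1 - (1 / 2 : ℝ) ^ (p + 2)) * zetaNat (p + 2) := by
    linear_combination -hval
  rw [hA] at hE
  have h1 := hE.mul_left ((2 : ℝ) ^ (p + 1))
  have h2 := hz.mul_left ((1 / 2 : ℝ))
  have h3 := h1.sub h2
  have hfun : (fun m : ℕ => (2 : ℝ) ^ (p + 1) * f (2 * m) - 1 / 2 * (1 / ((m : ℝ) + 1) ^ (p + 2)))
      = fun m : ℕ => (2 : ℝ) ^ (p + 1) / (2 * (m : ℝ) + 1) ^ (p + 2)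
          - 1 / (2 * ((m : ℝ) + 1) ^ (p + 2)) := by
    funext m
    rw [hf]
    push_cast
    rw [mul_one_div, div_mul_div_comm, one_mul]
  rw [hfun] at h3
  have h2p : (2 : ℝ) ^ (p + 1) * (1 / 2 : ℝ) ^ (p + 2) = 1 / 2 := by
    rw [div_pow, one_pow, mul_one_div, div_eq_div_iff (by positivity) (by norm_num),
      one_mul, ← pow_succ]
  have hvv : (2 : ℝ) ^ (p + 1) * ((1 - (1 / 2 : ℝ) ^ (p + 2)) * zetaNat (p + 2))
      - 1 / 2 * zetaNat (p + 2) = ((2 : ℝ) ^ (p + 1) - 1) * zetaNat (p + 2) := by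
    linear_combination -zetaNat (p + 2) * h2p
  rwa [hvv] at h3

theorem zeta_recursion (n : ℕ) (hn : 2 ≤ n) :
    zetaNat n = (1 / ((2 : ℝ) ^ (n - 1) - 1)) *
      ∑' k : ℕ, ((n + k).choose (k + 1) : ℝ) * zetaNat (n + k + 1) / 2 ^ (k + 2) := by
  obtain ⟨p, rfl⟩ : ∃ p, n = p + 2 := ⟨n - 2, by omega⟩
  have hg := hg_lemma p
  set F : ℕ → ℕ → ℝ := fun m k => ((p + 2 + k).choose (k + 1) : ℝ) /
      (2 ^ (k + 2) * ((m : ℝ) + 1) ^ (p + 2 + k + 1)) with hF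
  have hFsummable : Summable (Function.uncurry F) := by
    rw [summable_prod_of_nonneg (fun q => by
      simp only [Function.uncurry, hF]; positivity)]
    refine ⟨fun m => (inner_hasSum p m).summable, ?_⟩
    exact hg.summable.congr fun m => ((inner_hasSum p m).tsum_eq).symm
  have hswap : ∑' (k : ℕ) (m : ℕ), F m k = ∑' (m : ℕ) (k : ℕ), F m k :=
    Summable.tsum_comm hFsummable
  have hterm : ∀ k : ℕ, ((p + 2 + k).choose (k + 1) : ℝ) * zetaNat (p + 2 + k + 1) / 2 ^ (k + 2)
      = ∑' m : ℕ, F m k := by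
    intro k
    have hFe : ∀ m : ℕ, F m k = (((p + 2 + k).choose (k + 1) : ℝ)
        * (1 / ((m : ℝ) + 1) ^ (p + 2 + k + 1))) / 2 ^ (k + 2) := by
      intro m
      rw [hF, mul_one_div, div_div]
      congr 1
      ring
    rw [tsum_congr hFe, tsum_div_const, tsum_mul_left]
    rfl
  have hRHS : (∑' k : ℕ, ((p + 2 + k).choose (k + 1) : ℝ) * zetaNat (p + 2 + k + 1) / 2 ^ (k + 2))
      = ((2 : ℝ) ^ (p + 1) - 1) * zetaNat (p + 2) := by
    calc (∑' k : ℕ, ((p + 2 + k).choose (k + 1) : ℝ) * zetaNat (p + 2 + k + 1) / 2 ^ (k + 2))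
        = ∑' (k : ℕ) (m : ℕ), F m k := tsum_congr hterm
      _ = ∑' (m : ℕ) (k : ℕ), F m k := hswap
      _ = ∑' m : ℕ, ((2 : ℝ) ^ (p + 1) / (2 * (m : ℝ) + 1) ^ (p + 2)
            - 1 / (2 * ((m : ℝ) + 1) ^ (p + 2))) := tsum_congr fun m => (inner_hasSum p m).tsum_eq
      _ = ((2 : ℝ) ^ (p + 1) - 1) * zetaNat (p + 2) := hg.tsum_eq
  rw [hRHS, show p + 2 - 1 = p + 1 from rfl]
  have hc : ((2 : ℝ) ^ (p + 1) - 1) ≠ 0 := by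
    have h1 : (1 : ℝ) < 2 ^ (p + 1) := by
      apply one_lt_pow₀ (by norm_num) (by omega)
    linarith
  rw [one_div, inv_mul_cancel_left₀ hc]
end
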